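/- Let q and n be coprime positive integers. Then |N(n,q)| = ∑_{I ⊆ {1,...,m}} (gcd(n, gcd(s_i : i ∈ I))/n) · ∏_{i ∈ I} (q^{ℓ_i} − 1), where for I = ∅ the inner gcd is 0 (so the term is 1) and the empty product is 1. -/

import Mathlib

/-!
Burnside's lemma for the rotation action gives `n · |N(n,q)| = ∑_{k ∈ ℤ/n} q ^ gcd(n,k)`, since a
string fixed by the rotation by `k` is constant on the `gcd(n,k)` cosets of `⟨k⟩`. The annihilator
of `k` has `gcd(n,k)` elements and is stable under multiplication by the unit `q`, hence a union of
cyclotomic cosets: `gcd(n,k) = ∑_{s_i k = 0} ℓ_i`. Writing `q ^ ℓ_i = 1 + (q ^ ℓ_i - 1)`, expanding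
the product and exchanging the sums, the coefficient of `∏_{i ∈ I} (q ^ ℓ_i - 1)` counts the `k`
annihilated by every `s_i` with `i ∈ I`, i.e. by `gcd_I s`; there are `gcd(n, gcd_I s)` of them.
-/

/-- The cyclic-rotation equivalence on strings `ZMod n → Fin q`:
two strings are equivalent iff one is a cyclic rotation of the other.
Necklaces of length `n` with `q` colors are the equivalence classes. -/
def rotateSetoid (n q : ℕ) : Setoid (ZMod n → Fin q) where
  r w w' := ∃ k : ZMod n, ∀ z, w' z = w (z + k)
  iseqv := by
    constructor
    · intro w
      exact ⟨0, fun z => by rw [add_zero]⟩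
    · rintro w w' ⟨k, hk⟩
      exact ⟨-k, fun z => by rw [hk (z + -k)]; congr 1; ring⟩
    · rintro w w' w'' ⟨k, hk⟩ ⟨k', hk'⟩
      exact ⟨k + k', fun z => by rw [hk' z, hk (z + k')]; congr 1; ring⟩

open Finset Function

namespace Function

variable {α : Type*} {f : α → α} {x : α}

theorem minimalPeriod_eq_of_isLeast {n : ℕ} (h : IsLeast {l | 0 < l ∧ IsPeriodicPt f l x} n) :
    minimalPeriod f x = n := by
  rw [minimalPeriod_eq_sInf_n_pos_IsPeriodicPt]
  exact h.csInf_eq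

variable [Fintype α]

open Classical in
theorem card_filter_exists_iterate_eq (hx : x ∈ periodicPts f) :
    #{y | ∃ j, f^[j] x = y} = minimalPeriod f x := by
  have horbit : ({y | ∃ j, f^[j] x = y} : Finset α) =
      (range (minimalPeriod f x)).image (f^[·] x) := by
    ext y
    simp only [mem_filter, mem_univ, true_and, mem_image, mem_range]
    exact ⟨fun ⟨j, hj⟩ => ⟨j % minimalPeriod f x,
      Nat.mod_lt _ (minimalPeriod_pos_of_mem_periodicPts hx),
      by rw [iterate_mod_minimalPeriod_eq, hj]⟩, fun ⟨j, _, hj⟩ => ⟨j, hj⟩⟩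
  rw [horbit, card_image_of_injOn, card_range]
  simpa using iterate_injOn_Iio_minimalPeriod

theorem card_filter_eq_sum_minimalPeriod {ι : Type*} [Fintype ι] {s : ι → α}
    (hs : ∀ i, s i ∈ periodicPts f) (hS : ∀ y, ∃! i, ∃ j, f^[j] (s i) = y)
    (P : α → Prop) [DecidablePred P] (hP : ∀ y, P (f y) ↔ P y) :
    #{y | P y} = ∑ i with P (s i), minimalPeriod f (s i) := by
  classical
  choose idx hidx huniq using hS
  have hP_iterate : ∀ j y, P (f^[j] y) ↔ P y := by
    intro j
    induction j with
    | zero => simp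
    | succ j ih => intro y; rw [iterate_succ_apply', hP, ih]
  rw [card_eq_sum_card_fiberwise (f := idx) (t := univ) (by simp), sum_filter]
  refine sum_congr rfl fun i _ => ?_
  have hfiber : ∀ y, idx y = i ↔ ∃ j, f^[j] (s i) = y :=
    fun y => ⟨fun h => h ▸ hidx y, fun h => (huniq y i h).symm⟩
  split_ifs with hi
  · rw [← card_filter_exists_iterate_eq (hs i)]
    congr 1
    ext y
    simp only [mem_filter, mem_univ, true_and, hfiber]
    exact ⟨And.right, fun ⟨j, hj⟩ => ⟨hj ▸ (hP_iterate j _).2 hi, j, hj⟩⟩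
  · rw [card_eq_zero, filter_eq_empty_iff]
    simp only [mem_filter, mem_univ, true_and, hfiber]
    rintro y hy ⟨j, rfl⟩
    exact hi ((hP_iterate j _).1 hy)

end Function

theorem Finset.gcd_nsmul_eq_zero_iff {G ι : Type*} [AddMonoid G] (I : Finset ι) (s : ι → ℕ)
    (x : G) :
    I.gcd s • x = 0 ↔ ∀ i ∈ I, s i • x = 0 := by
  simp_rw [← addOrderOf_dvd_iff_nsmul_eq_zero, Finset.dvd_gcd_iff]

theorem Finset.sum_prod_one_add_eq_sum_card_mul_prod {α ι R : Type*} [Fintype α] [Fintype ι]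
    [DecidableEq ι] [CommSemiring R] (T : α → Finset ι) (c : ι → R) :
    ∑ a, ∏ i ∈ T a, (1 + c i) = ∑ I, #{a | I ⊆ T a} * ∏ i ∈ I, c i := by
  simp_rw [prod_one_add]
  rw [sum_comm' (t' := univ) (s' := fun I => {a | I ⊆ T a}) (by simp)]
  simp_rw [sum_const, nsmul_eq_mul]

namespace ZMod

variable {n : ℕ} [NeZero n]

theorem card_filter_nsmul_eq_zero (d : ℕ) : #{z : ZMod n | d • z = 0} = n.gcd d := by
  have h := IsAddCyclic.card_nsmulAddMonoidHom_ker (ZMod n) d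
  rw [Nat.card_zmod] at h
  rw [← h, ← Fintype.card_subtype, ← Nat.card_eq_fintype_card]
  rfl

theorem card_filter_mul_eq_zero (k : ZMod n) : #{z : ZMod n | z * k = 0} = n.gcd k.val := by
  rw [← card_filter_nsmul_eq_zero]
  simp_rw [nsmul_eq_mul, natCast_zmod_val, mul_comm]

theorem index_zmultiples (a : ZMod n) : (AddSubgroup.zmultiples a).index = n.gcd a.val := by
  have h := (AddSubgroup.zmultiples a).index_mul_card
  have hord : addOrderOf a = n / n.gcd a.val := by
    rw [← addOrderOf_coe _ (NeZero.ne n), natCast_zmod_val]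
  rw [Nat.card_zmultiples, hord, Nat.card_zmod] at h
  have hpos : 0 < n / n.gcd a.val :=
    Nat.div_pos (Nat.gcd_le_left _ (NeZero.pos n)) (Nat.gcd_pos_of_pos_left _ (NeZero.pos n))
  exact Nat.eq_of_mul_eq_mul_right hpos (h.trans (Nat.mul_div_cancel' (Nat.gcd_dvd_left _ _)).symm)

end ZMod

section Rotation

attribute [local instance] arrowAddAction

variable {G B : Type*} [AddCommGroup G]

theorem arrowAddAction_vadd_apply (a : G) (w : G → B) (z : G) : (a +ᵥ w) z = w (-a + z) := rfl

theorem mem_fixedBy_arrow_iff_periodic (a : G) (w : G → B) :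
    w ∈ AddAction.fixedBy (G → B) a ↔ Periodic w a := by
  rw [AddAction.mem_fixedBy, funext_iff]
  simp only [arrowAddAction_vadd_apply]
  exact ⟨fun h z => by simpa using (h (z + a)).symm,
    fun h z => by simpa using (h (-a + z)).symm⟩

theorem periodic_iff_leftRel_le_ker (w : G → B) (a : G) :
    Periodic w a ↔ QuotientAddGroup.leftRel (AddSubgroup.zmultiples a) ≤ Setoid.ker w := by
  constructor
  · intro h x y hxy
    obtain ⟨k, hk⟩ := AddSubgroup.mem_zmultiples_iff.1 (QuotientAddGroup.leftRel_apply.1 hxy)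
    have hy : y = x + k • a := by rw [hk]; abel
    rw [Setoid.ker_def, hy, (h.zsmul k) x]
  · intro h z
    exact (h (QuotientAddGroup.leftRel_apply.2 (by simp))).symm

theorem card_fixedBy_arrow [Finite G] (a : G) :
    Nat.card (AddAction.fixedBy (G → B) a) = Nat.card B ^ (AddSubgroup.zmultiples a).index := by
  have e : AddAction.fixedBy (G → B) a ≃ (G ⧸ AddSubgroup.zmultiples a → B) :=
    (Equiv.subtypeEquivRight fun w =>
      (mem_fixedBy_arrow_iff_periodic a w).trans (periodic_iff_leftRel_le_ker w a)).trans
      (Setoid.liftEquiv _)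
  rw [Nat.card_congr e, Nat.card_fun, AddSubgroup.index]

theorem orbitRel_eq_rotateSetoid (n q : ℕ) :
    AddAction.orbitRel (ZMod n) (ZMod n → Fin q) = rotateSetoid n q := by
  refine Setoid.ext fun w w' => ?_
  rw [AddAction.orbitRel_apply, AddAction.mem_orbit_iff]
  constructor
  · rintro ⟨k, rfl⟩
    exact ⟨k, fun z => by simp [arrowAddAction_vadd_apply]⟩
  · rintro ⟨k, hk⟩
    exact ⟨k, funext fun z => by simp [arrowAddAction_vadd_apply, hk]⟩

theorem card_quotient_rotateSetoid_mul (n q : ℕ) [NeZero n] :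
    Nat.card (Quotient (rotateSetoid n q)) * n = ∑ a : ZMod n, q ^ n.gcd a.val := by
  classical
  have h := AddAction.sum_card_fixedBy_eq_card_orbits_mul_card_addGroup (ZMod n) (ZMod n → Fin q)
  simp only [← Nat.card_eq_fintype_card, card_fixedBy_arrow, ZMod.index_zmultiples, Nat.card_fin,
    Nat.card_zmod] at h
  rw [← orbitRel_eq_rotateSetoid, ← h]

end Rotation

theorem ZMod.gcd_val_eq_sum_of_cyclotomicCosets {q n : ℕ} [NeZero n] (hqn : q.Coprime n)
    {m : ℕ} {s ℓ : Fin m → ℕ}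
    (hS : ∀ z : ZMod n, ∃! i : Fin m, ∃ j : ℕ, z = (q : ZMod n) ^ j * (s i : ZMod n))
    (hl : ∀ i, IsLeast {l : ℕ | 0 < l ∧ (q : ZMod n) ^ l * (s i : ZMod n) = (s i : ZMod n)} (ℓ i))
    (k : ZMod n) :
    n.gcd k.val = ∑ i with s i • k = 0, ℓ i := by
  have hq_unit : IsUnit (q : ZMod n) := (ZMod.isUnit_iff_coprime q n).2 hqn
  have hℓ : ∀ i, minimalPeriod ((q : ZMod n) * ·) (s i) = ℓ i := fun i =>
    minimalPeriod_eq_of_isLeast (by simpa [IsPeriodicPt, IsFixedPt, mul_left_iterate] using hl i)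
  rw [← ZMod.card_filter_mul_eq_zero, card_filter_eq_sum_minimalPeriod
    (fun i => minimalPeriod_pos_iff_mem_periodicPts.1 ((hℓ i).symm ▸ (hl i).1.1))
    (by simpa [mul_left_iterate, eq_comm] using hS) _
    (fun z => by rw [mul_assoc, hq_unit.mul_right_eq_zero])]
  simp [hℓ, nsmul_eq_mul]

theorem N_card_formula_general
    (q n : ℕ) [NeZero n] (hqn : Nat.Coprime q n)
    (m : ℕ) (s : Fin m → ℕ) (ℓ : Fin m → ℕ)
    (hS : ∀ z : ZMod n, ∃! i : Fin m, ∃ j : ℕ, z = (q : ZMod n) ^ j * (s i : ZMod n))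
    (hl : ∀ i, IsLeast {l : ℕ | 0 < l ∧ (q : ZMod n) ^ l * (s i : ZMod n) = (s i : ZMod n)} (ℓ i)) :
    (Nat.card (Quotient (rotateSetoid n q)) : ℚ) =
      ∑ I : Finset (Fin m),
        (Nat.gcd n (I.gcd s) : ℚ) / (n : ℚ) * ∏ i ∈ I, ((q : ℚ) ^ (ℓ i) - 1) := by
  have hcount : ∀ I : Finset (Fin m),
      #{k : ZMod n | I ⊆ ({i | s i • k = 0} : Finset (Fin m))} = n.gcd (I.gcd s) := by
    intro I
    rw [← ZMod.card_filter_nsmul_eq_zero]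
    simp only [Finset.gcd_nsmul_eq_zero_iff, subset_iff, mem_filter, mem_univ, true_and]
  have hsum : (Nat.card (Quotient (rotateSetoid n q)) : ℚ) * n =
      ∑ I : Finset (Fin m), (n.gcd (I.gcd s) : ℚ) * ∏ i ∈ I, ((q : ℚ) ^ ℓ i - 1) := by
    calc (Nat.card (Quotient (rotateSetoid n q)) : ℚ) * n
        = ∑ k : ZMod n, (q : ℚ) ^ n.gcd k.val := by
          exact_mod_cast card_quotient_rotateSetoid_mul n q
      _ = ∑ k : ZMod n, ∏ i with s i • k = 0, (1 + ((q : ℚ) ^ ℓ i - 1)) := by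
          simp_rw [add_sub_cancel, prod_pow_eq_pow_sum,
            ZMod.gcd_val_eq_sum_of_cyclotomicCosets hqn hS hl]
      _ = _ := by
          rw [sum_prod_one_add_eq_sum_card_mul_prod]
          simp_rw [hcount]
  rw [eq_div_of_mul_eq (NeZero.ne (n : ℚ)) hsum, sum_div]
  simp_rw [div_mul_eq_mul_div]

/-- Cardinality formula for the set `N(n,q)` of necklaces of length `n` with `q` colors,
in terms of the cyclotomic cosets of `ZMod n`: `S_i = {q^j·s_i : j ∈ ℕ}` (orbits of
`z ↦ q·z`), with representatives `s i` and `ℓ i` the least positive integer with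
`q^(ℓ i)·s_i ≡ s_i (mod n)`. -/
theorem N_card_formula
    (q n : ℕ) (hq : 0 < q) (hn : 0 < n) [NeZero n] (hqn : Nat.Coprime q n)
    (m : ℕ) (s : Fin m → ℕ) (ℓ : Fin m → ℕ)
    (hS : ∀ z : ZMod n, ∃! i : Fin m, ∃ j : ℕ, z = (q : ZMod n) ^ j * (s i : ZMod n))
    (hl : ∀ i, IsLeast {l : ℕ | 0 < l ∧ (q : ZMod n) ^ l * (s i : ZMod n) = (s i : ZMod n)} (ℓ i)) :
    (Nat.card (Quotient (rotateSetoid n q)) : ℚ) =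
      ∑ I : Finset (Fin m),
        (Nat.gcd n (I.gcd s) : ℚ) / (n : ℚ) * ∏ i ∈ I, ((q : ℚ) ^ (ℓ i) - 1) :=
  N_card_formula_general q n hqn m s ℓ hS hl
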